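/- For every integer d ≥ 2, the dual graph G_d of the complex C_d admits a Hamiltonian path (a path visiting every vertex of G_d exactly once). -/

import Mathlib

instance (d : ℕ) : NeZero (d + 12) := ⟨by omega⟩

/-- The natural labeling of the vertex set `{1,...,n}` (with `n = d + 12`) by `ZMod n`:
each residue is sent to its representative in `{1,...,n}`. -/
def repC (d : ℕ) (x : ZMod (d + 12)) : ℕ :=
  if x = 0 then d + 12 else x.val

/-- The facet `H_i = {i, i+1, ..., i+d}` of `C_d`, with entries reduced mod `n = d + 12`
to representatives in `{1,...,n}`. -/
def Hface (d : ℕ) (i : ℕ) : Finset ℕ :=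
  (Finset.range (d + 1)).image (fun (j : ℕ) => repC d ((i : ZMod (d + 12)) + (j : ZMod (d + 12))))

def Fone (d : ℕ) : Finset ℕ := insert 1 (insert 5 (Finset.Icc 7 (d + 5)))
def Ftwo (d : ℕ) : Finset ℕ := insert 1 (insert (d + 7) (Finset.Icc 7 (d + 5)))
def Fthree (d : ℕ) : Finset ℕ := insert 2 (insert 8 (Finset.Icc 10 (d + 8)))
def Ffour (d : ℕ) : Finset ℕ := insert 2 (insert (d + 10) (Finset.Icc 10 (d + 8)))

/-- The facets of the pure `d`-complex `C_d` on vertex set `{1,...,d+12}`: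
the faces `H_1, ..., H_n` together with `F_1, F_2, F_3, F_4`. -/
def facetsC (d : ℕ) : Finset (Finset ℕ) :=
  (Finset.Icc 1 (d + 12)).image (Hface d) ∪ {Fone d, Ftwo d, Fthree d, Ffour d}

/-- The dual graph `G_d` of `C_d`: vertices are the facets of `C_d`, two facets being
adjacent iff their intersection has exactly `d` elements. -/
def dualGraphC (d : ℕ) : SimpleGraph {F : Finset ℕ // F ∈ facetsC d} where
  Adj A B := A ≠ B ∧ ((A : Finset ℕ) ∩ (B : Finset ℕ)).card = d
  symm := by
    constructor
    intro A B h
    exact ⟨h.1.symm, by rw [Finset.inter_comm]; exact h.2⟩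
  loopless := by
    constructor
    intro A h
    exact h.1 rfl

/-!
Consecutive faces `H_i`, `H_{i+1}` share `d` vertices, so the `H_i` form a cycle in `G_d`. Cutting
it open and splicing in `F_2, F_1` and `F_4, F_3` gives the walk
`H_6, H_7, F_2, F_1, H_5, H_4, ..., H_1, H_n, ..., H_10, F_4, F_3, H_8, H_9`,
whose consecutive facets again share `d` vertices. It has length `n + 3` and meets every facet,
and the complex has exactly `n + 4` facets: the `H_i` are distinct cyclic intervals, and no `F_j`
is one, since each `F_j` has two elements `k < n` with `k + 1` missing. Hence the walk is a
Hamiltonian path.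
-/

open Finset SimpleGraph

lemma Nat.card_insert_Icc {x a b : ℕ} (hx : x < a ∨ b < x) (hab : a ≤ b + 1) :
    #(insert x (Icc a b)) = b + 2 - a := by
  rw [card_insert_of_notMem (by simp only [mem_Icc]; omega), Nat.card_Icc]
  omega

namespace SimpleGraph

variable {V : Type*} {G : SimpleGraph V}

theorem Walk.isHamiltonian_of_forall_mem_support [Fintype V] [DecidableEq V] {a b : V}
    {p : G.Walk a b} (hmem : ∀ v, v ∈ p.support) (hlen : p.length + 1 = Fintype.card V) :
    p.IsHamiltonian := by
  rw [Walk.isHamiltonian_iff_support_get_bijective, Fintype.bijective_iff_surjective_and_card]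
  exact ⟨fun v => List.mem_iff_get.mp (hmem v), by simp [hlen]⟩

variable {f : ℕ → V}

def descendingWalk (hf : ∀ i, G.Adj (f (i + 1)) (f i)) (a : ℕ) :
    (k : ℕ) → G.Walk (f (a + k)) (f a)
  | 0 => Walk.nil
  | k + 1 => Walk.cons (hf (a + k)) (descendingWalk hf a k)

lemma length_descendingWalk (hf : ∀ i, G.Adj (f (i + 1)) (f i)) (a k : ℕ) :
    (descendingWalk hf a k).length = k := by
  induction k with
  | zero => rfl
  | succ k ih => simp [descendingWalk, ih]

lemma mem_support_descendingWalk (hf : ∀ i, G.Adj (f (i + 1)) (f i)) (a : ℕ) {j k : ℕ}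
    (hj : j ≤ k) : f (a + j) ∈ (descendingWalk hf a k).support := by
  induction k with
  | zero => simp [descendingWalk, Nat.le_zero.mp hj]
  | succ k ih =>
    rcases hj.lt_or_eq with hj | rfl
    · simp [descendingWalk, ih (by omega)]
    · simp [descendingWalk]

end SimpleGraph

namespace ZMod

variable {m : ℕ}

def cyclicInterval (a : ZMod m) (d : ℕ) : Finset (ZMod m) :=
  (range (d + 1)).image fun j : ℕ => a + j

variable {a : ZMod m} {d : ℕ}

lemma mem_cyclicInterval {x : ZMod m} : x ∈ cyclicInterval a d ↔ ∃ j ≤ d, a + j = x := by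
  simp [cyclicInterval]

lemma natCast_injOn_range {k : ℕ} (hk : k ≤ m) :
    Set.InjOn (Nat.cast : ℕ → ZMod m) (range k) := by
  intro i hi j hj h
  simp only [coe_range, Set.mem_Iio] at hi hj
  rwa [natCast_eq_natCast_iff', Nat.mod_eq_of_lt (by omega), Nat.mod_eq_of_lt (by omega)] at h

lemma card_cyclicInterval (h : d < m) : #(cyclicInterval a d) = d + 1 := by
  rw [cyclicInterval, card_image_of_injOn, card_range]
  exact fun i hi j hj hij => natCast_injOn_range h hi hj (add_left_cancel hij)

lemma notMem_cyclicInterval_add_one (h : d + 1 < m) : a ∉ cyclicInterval (a + 1) d := by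
  rw [mem_cyclicInterval]
  rintro ⟨j, hj, hja⟩
  have : ((j + 1 : ℕ) : ZMod m) = ((0 : ℕ) : ZMod m) := by
    push_cast
    linear_combination hja
  exact absurd (natCast_injOn_range h (mem_coe.mpr (mem_range.mpr (by omega)))
    (mem_coe.mpr (mem_range.mpr (by omega))) this) (by omega)

lemma cyclicInterval_inter_add_one (h : d + 1 < m) :
    cyclicInterval a d ∩ cyclicInterval (a + 1) d = (cyclicInterval a d).erase a := by
  ext x
  simp only [mem_inter, mem_erase]
  refine ⟨fun ⟨hx, hx'⟩ => ⟨fun hxa => notMem_cyclicInterval_add_one h (hxa ▸ hx'), hx⟩,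
    fun ⟨hxa, hx⟩ => ⟨hx, ?_⟩⟩
  obtain ⟨_ | j, hj, rfl⟩ := mem_cyclicInterval.mp hx
  · simp at hxa
  · exact mem_cyclicInterval.mpr ⟨j, by omega, by push_cast; ring⟩

lemma card_cyclicInterval_inter_add_one (h : d + 1 < m) :
    #(cyclicInterval a d ∩ cyclicInterval (a + 1) d) = d := by
  rw [cyclicInterval_inter_add_one h, card_erase_of_mem, card_cyclicInterval (by omega)]
  · rfl
  · exact mem_cyclicInterval.mpr ⟨0, by omega, by simp⟩

end ZMod

section Faces

variable (d : ℕ)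

lemma repC_injective : Function.Injective (repC d) := by
  intro x y h
  unfold repC at h
  split_ifs at h with hx hy hy
  · exact hx.trans hy.symm
  · exact absurd h.symm (ZMod.val_lt y).ne
  · exact absurd h (ZMod.val_lt x).ne
  · exact ZMod.val_injective _ h

lemma natCast_repC (x : ZMod (d + 12)) : (repC d x : ZMod (d + 12)) = x := by
  unfold repC
  split_ifs with h <;> simp [h]

lemma repC_mem_Icc (x : ZMod (d + 12)) : repC d x ∈ Icc 1 (d + 12) := by
  unfold repC
  split_ifs with h
  · simp
  · exact mem_Icc.mpr ⟨ZMod.val_pos.mpr h, (ZMod.val_lt x).le⟩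

variable {d}

lemma repC_natCast {k : ℕ} (h1 : 1 ≤ k) (h2 : k ≤ d + 12) : repC d k = k := by
  rcases h2.lt_or_eq with h | rfl
  · have hk : (k : ZMod (d + 12)).val = k := ZMod.val_cast_of_lt h
    have hne : (k : ZMod (d + 12)) ≠ 0 := fun e => by rw [e, ZMod.val_zero] at hk; omega
    simp [repC, hne, hk]
  · simp [repC]

variable (d)

lemma Hface_eq_image_cyclicInterval (i : ℕ) :
    Hface d i = (ZMod.cyclicInterval (i : ZMod (d + 12)) d).image (repC d) := by
  rw [Hface, ZMod.cyclicInterval, image_image]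
  rfl

lemma Hface_repC_natCast (i : ℕ) : Hface d (repC d i) = Hface d i := by
  simp only [Hface, natCast_repC]

lemma Hface_add_period (i : ℕ) : Hface d (i + (d + 12)) = Hface d i := by
  simp [Hface]

lemma card_Hface (i : ℕ) : #(Hface d i) = d + 1 := by
  rw [Hface_eq_image_cyclicInterval, card_image_of_injective _ (repC_injective d),
    ZMod.card_cyclicInterval (by omega)]

lemma card_Hface_inter_Hface_succ (i : ℕ) : #(Hface d i ∩ Hface d (i + 1)) = d := by
  rw [Hface_eq_image_cyclicInterval, Hface_eq_image_cyclicInterval,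
    ← image_inter _ _ (repC_injective d), card_image_of_injective _ (repC_injective d),
    Nat.cast_succ, ZMod.card_cyclicInterval_inter_add_one (by omega)]

variable {d}

lemma mem_Hface_iff {i x : ℕ} (hi1 : 1 ≤ i) (hi2 : i ≤ d + 12) :
    x ∈ Hface d i ↔
      (i ≤ x ∧ x ≤ i + d ∧ x ≤ d + 12) ∨ (1 ≤ x ∧ x + (d + 12) ≤ i + d) := by
  have wrap (k : ℕ) (h1 : d + 12 < k) (h2 : k < 2 * (d + 12)) : repC d k = k - (d + 12) := by
    rw [show k = k - (d + 12) + (d + 12) by omega, Nat.cast_add, ZMod.natCast_self, add_zero,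
      repC_natCast (by omega) (by omega)]
    omega
  simp only [Hface, mem_image, mem_range, ← Nat.cast_add]
  constructor
  · rintro ⟨j, hj, rfl⟩
    rcases le_or_gt (i + j) (d + 12) with h | h
    · rw [repC_natCast (by omega) h]; omega
    · rw [wrap _ h (by omega)]; omega
  · rintro (⟨h1, h2, h3⟩ | ⟨h1, h2⟩)
    · exact ⟨x - i, by omega, by rw [Nat.add_sub_cancel' h1, repC_natCast (by omega) h3]⟩
    · exact ⟨x + (d + 12) - i, by omega, by rw [wrap _ (by omega) (by omega)]; omega⟩

variable (d) in
lemma Hface_eq_Icc (i : ℕ) (hi1 : 1 ≤ i) (hi2 : i ≤ 12) : Hface d i = Icc i (i + d) := by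
  ext x
  rw [mem_Hface_iff hi1 (by omega), mem_Icc]
  omega

lemma Hface_injOn : Set.InjOn (Hface d) (Icc 1 (d + 12)) := by
  intro i hi j hj h
  simp only [coe_Icc, Set.mem_Icc] at hi hj
  have key : ∀ x, x ∈ Hface d i ↔ x ∈ Hface d j := fun x => by rw [h]
  -- `k` is the first element of `H_k`: `k ∈ H_k` but `k - 1 ∉ H_k`
  have := key i; have := key j; have := key (i - 1); have := key (j - 1)
  simp only [mem_Hface_iff hi.1 hi.2, mem_Hface_iff hj.1 hj.2] at *
  omega

/-- `H_i` has at most one element `k < n` with `k + 1 ∉ H_i`, namely its last one. -/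
lemma Hface_ne_of_two_ends {F : Finset ℕ} {i a b : ℕ} (hi1 : 1 ≤ i) (hi2 : i ≤ d + 12)
    (ha : 1 ≤ a) (hab : a < b) (hb : b < d + 12) (haF : a ∈ F) (ha'F : a + 1 ∉ F)
    (hbF : b ∈ F) (hb'F : b + 1 ∉ F) : Hface d i ≠ F := by
  rintro rfl
  simp only [mem_Hface_iff hi1 hi2] at haF ha'F hbF hb'F
  omega

lemma Hface_notMem_Fs {i : ℕ} (hi1 : 1 ≤ i) (hi2 : i ≤ d + 12) :
    Hface d i ∉ ({Fone d, Ftwo d, Fthree d, Ffour d} : Finset (Finset ℕ)) := by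
  simp only [mem_insert, mem_singleton, not_or]
  refine ⟨Hface_ne_of_two_ends (a := 1) (b := 5) hi1 hi2 ?_ ?_ ?_ ?_ ?_ ?_ ?_,
    Hface_ne_of_two_ends (a := 1) (b := d + 7) hi1 hi2 ?_ ?_ ?_ ?_ ?_ ?_ ?_,
    Hface_ne_of_two_ends (a := 2) (b := 8) hi1 hi2 ?_ ?_ ?_ ?_ ?_ ?_ ?_,
    Hface_ne_of_two_ends (a := 2) (b := d + 10) hi1 hi2 ?_ ?_ ?_ ?_ ?_ ?_ ?_⟩ <;>
  simp [Fone, Ftwo, Fthree, Ffour]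

lemma card_Fs : #({Fone d, Ftwo d, Fthree d, Ffour d} : Finset (Finset ℕ)) = 4 := by
  rw [card_insert_of_notMem, card_insert_of_notMem, card_pair]
  all_goals simp only [mem_insert, mem_singleton, not_or, ne_eq, Finset.ext_iff, not_forall]
  · exact ⟨8, by simp [Fthree, Ffour]⟩
  · exact ⟨⟨1, by simp [Ftwo, Fthree]⟩, ⟨1, by simp [Ftwo, Ffour]⟩⟩
  · exact ⟨⟨5, by simp [Fone, Ftwo]⟩, ⟨1, by simp [Fone, Fthree]⟩,
      ⟨1, by simp [Fone, Ffour]⟩⟩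

lemma card_facetsC : #(facetsC d) = d + 16 := by
  rw [facetsC, card_union_of_disjoint, card_image_of_injOn Hface_injOn, Nat.card_Icc, card_Fs]
  · omega
  rw [Finset.disjoint_left]
  rintro _ hF
  obtain ⟨i, hi, rfl⟩ := mem_image.mp hF
  exact Hface_notMem_Fs (mem_Icc.mp hi).1 (mem_Icc.mp hi).2

variable (d) in
lemma Hface_mem_facetsC (i : ℕ) : Hface d i ∈ facetsC d :=
  mem_union_left _ (mem_image.mpr ⟨repC d i, repC_mem_Icc d i, Hface_repC_natCast d i⟩)

lemma card_Fone (hd : 1 ≤ d) : #(Fone d) = d + 1 := by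
  rw [Fone, card_insert_of_notMem (by simp), Nat.card_insert_Icc (by omega) (by omega)]
  omega

lemma card_Fthree (hd : 1 ≤ d) : #(Fthree d) = d + 1 := by
  rw [Fthree, card_insert_of_notMem (by simp), Nat.card_insert_Icc (by omega) (by omega)]
  omega

end Faces

section DualGraph

variable {d : ℕ}

lemma dualGraphC_adj_of_card_inter {A B : {F : Finset ℕ // F ∈ facetsC d}} (hA : #A.1 = d + 1)
    (h : #(A.1 ∩ B.1) = d) : (dualGraphC d).Adj A B :=
  ⟨by rintro rfl; rw [inter_self] at h; omega, h⟩

lemma dualGraphC_adj_of_inter_eq_insert_Icc (hd : 1 ≤ d)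
    {A B : {F : Finset ℕ // F ∈ facetsC d}} (hA : #A.1 = d + 1) {x a b : ℕ}
    (hab : b + 2 = a + d) (hx : x < a ∨ b < x)
    (h : A.1 ∩ B.1 = insert x (Icc a b)) : (dualGraphC d).Adj A B := by
  refine dualGraphC_adj_of_card_inter hA ?_
  rw [h, Nat.card_insert_Icc hx (by omega)]
  omega

variable (d)

def vH (i : ℕ) : {F : Finset ℕ // F ∈ facetsC d} := ⟨Hface d i, Hface_mem_facetsC d i⟩
def vF1 : {F : Finset ℕ // F ∈ facetsC d} := ⟨Fone d, by simp [facetsC]⟩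
def vF2 : {F : Finset ℕ // F ∈ facetsC d} := ⟨Ftwo d, by simp [facetsC]⟩
def vF3 : {F : Finset ℕ // F ∈ facetsC d} := ⟨Fthree d, by simp [facetsC]⟩
def vF4 : {F : Finset ℕ // F ∈ facetsC d} := ⟨Ffour d, by simp [facetsC]⟩

lemma adj_vH_succ (i : ℕ) : (dualGraphC d).Adj (vH d (i + 1)) (vH d i) :=
  dualGraphC_adj_of_card_inter (card_Hface d _)
    (by rw [inter_comm]; exact card_Hface_inter_Hface_succ d i)

variable {d}

lemma adj_vH7_vF2 (hd : 1 ≤ d) : (dualGraphC d).Adj (vH d 7) (vF2 d) := by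
  refine dualGraphC_adj_of_inter_eq_insert_Icc hd (card_Hface d 7) (x := d + 7) (a := 7)
    (b := d + 5) (by omega) (by omega) ?_
  ext x
  simp only [vH, vF2, Hface_eq_Icc d 7 (by norm_num) (by norm_num), mem_inter, Ftwo, mem_insert,
    mem_Icc]
  omega

lemma adj_vF1_vF2 (hd : 1 ≤ d) : (dualGraphC d).Adj (vF1 d) (vF2 d) := by
  refine dualGraphC_adj_of_inter_eq_insert_Icc hd (card_Fone hd) (x := 1) (a := 7)
    (b := d + 5) (by omega) (by omega) ?_
  ext x
  simp only [vF1, vF2, mem_inter, Fone, Ftwo, mem_insert, mem_Icc]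
  omega

lemma adj_vF1_vH (hd : 1 ≤ d) : (dualGraphC d).Adj (vF1 d) (vH d (10 + (d + 7))) := by
  refine dualGraphC_adj_of_inter_eq_insert_Icc hd (card_Fone hd) (x := 5) (a := 7)
    (b := d + 5) (by omega) (by omega) ?_
  ext x
  simp only [vF1, vH, show 10 + (d + 7) = 5 + (d + 12) by omega, Hface_add_period,
    Hface_eq_Icc d 5 (by norm_num) (by norm_num), mem_inter, Fone, mem_insert, mem_Icc]
  omega

lemma adj_vH10_vF4 (hd : 1 ≤ d) : (dualGraphC d).Adj (vH d 10) (vF4 d) := by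
  refine dualGraphC_adj_of_inter_eq_insert_Icc hd (card_Hface d 10) (x := d + 10) (a := 10)
    (b := d + 8) (by omega) (by omega) ?_
  ext x
  simp only [vH, vF4, Hface_eq_Icc d 10 (by norm_num) (by norm_num), mem_inter, Ffour,
    mem_insert, mem_Icc]
  omega

lemma adj_vF3_vF4 (hd : 1 ≤ d) : (dualGraphC d).Adj (vF3 d) (vF4 d) := by
  refine dualGraphC_adj_of_inter_eq_insert_Icc hd (card_Fthree hd) (x := 2) (a := 10)
    (b := d + 8) (by omega) (by omega) ?_
  ext x
  simp only [vF3, vF4, mem_inter, Fthree, Ffour, mem_insert, mem_Icc]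
  omega

lemma adj_vF3_vH8 (hd : 1 ≤ d) : (dualGraphC d).Adj (vF3 d) (vH d 8) := by
  refine dualGraphC_adj_of_inter_eq_insert_Icc hd (card_Fthree hd) (x := 8) (a := 10)
    (b := d + 8) (by omega) (by omega) ?_
  ext x
  simp only [vF3, vH, Hface_eq_Icc d 8 (by norm_num) (by norm_num), mem_inter, Fthree,
    mem_insert, mem_Icc]
  omega

lemma exists_eq_vH_or_vF (v : {F : Finset ℕ // F ∈ facetsC d}) :
    (∃ i, 6 ≤ i ∧ i ≤ d + 17 ∧ v = vH d i) ∨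
      v = vF1 d ∨ v = vF2 d ∨ v = vF3 d ∨ v = vF4 d := by
  obtain ⟨F, hF⟩ := v
  rcases mem_union.mp hF with hH | hF'
  · obtain ⟨i, hi, rfl⟩ := mem_image.mp hH
    rw [mem_Icc] at hi
    left
    by_cases h : 6 ≤ i
    · exact ⟨i, h, by omega, rfl⟩
    · exact ⟨i + (d + 12), by omega, by omega, Subtype.ext (Hface_add_period d i).symm⟩
  · simp only [mem_insert, mem_singleton] at hF'
    rcases hF' with rfl | rfl | rfl | rfl <;> simp [vF1, vF2, vF3, vF4]

def hamPath (hd : 1 ≤ d) : (dualGraphC d).Walk (vH d 6) (vH d 9) :=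
  .cons (adj_vH_succ d 6).symm <| .cons (adj_vH7_vF2 hd) <| .cons (adj_vF1_vF2 hd).symm <|
    .cons (adj_vF1_vH hd) <| (descendingWalk (adj_vH_succ d) 10 (d + 7)).append <|
    .cons (adj_vH10_vF4 hd) <| .cons (adj_vF3_vF4 hd).symm <| .cons (adj_vF3_vH8 hd) <|
    .cons (adj_vH_succ d 8).symm .nil

lemma length_hamPath (hd : 1 ≤ d) : (hamPath hd).length = d + 15 := by
  simp [hamPath, length_descendingWalk]

lemma mem_support_hamPath (hd : 1 ≤ d) (v : {F : Finset ℕ // F ∈ facetsC d}) :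
    v ∈ (hamPath hd).support := by
  simp only [hamPath, Walk.support_cons, Walk.support_append, Walk.support_nil, List.tail_cons,
    List.mem_cons, List.mem_append]
  rcases exists_eq_vH_or_vF v with ⟨i, hi6, hi, rfl⟩ | rfl | rfl | rfl | rfl
  · by_cases h : i < 10
    · interval_cases i <;> simp
    · obtain ⟨j, rfl⟩ : ∃ j, i = 10 + j := ⟨i - 10, by omega⟩
      simp [mem_support_descendingWalk _ _ (show j ≤ d + 7 by omega)]
  all_goals simp

end DualGraph

/-- For every `d ≥ 2`, the dual graph `G_d` of `C_d` admits a Hamiltonian path: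
a path visiting every vertex (facet) exactly once. -/
theorem Cd_dual_hamiltonian_path (d : ℕ) (hd : 2 ≤ d) :
    ∃ (A B : {F : Finset ℕ // F ∈ facetsC d}) (p : (dualGraphC d).Walk A B),
      p.IsHamiltonian := by
  refine ⟨_, _, hamPath (by omega),
    Walk.isHamiltonian_of_forall_mem_support (mem_support_hamPath _) ?_⟩
  rw [length_hamPath, Fintype.card_coe, card_facetsC]
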